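/- For 3 ≤ k ≤ n, the alternating sum ∑_{i=k}^{n} (-1)^{k+i} 2^{n-i} C(n,i) equals T(n, n-k), where T is defined by the recurrence T(n,0)=T(n,n)=1 and T(n,k)=2T(n-1,k-1)+T(n-1,k) for 0<k<n. -/

import Mathlib

/-! Writing `A x n k = ∑_{i=k}^{n} (-1)^(k+i) x^(n-i) C(n,i)`, Pascal's rule gives
`A x (n+1) (k+1) = x A x n (k+1) + A x n k`, and the binomial theorem gives
`A x n 0 = (x - 1)^n`. For `x = 2` these are the boundary values and the recurrence of
`T n (n - k)`, so the two agree by induction on `n`. -/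

/-- Sloane's A119258: `T n 0 = T n n = 1` and `T n k = 2 T (n-1) (k-1) + T (n-1) k`
for `0 < k < n`, with `T n k = 0` for `k > n`. -/
def T : ℕ → ℕ → ℤ
  | _, 0 => 1
  | 0, _ + 1 => 0
  | n + 1, k + 1 =>
    if n + 1 ≤ k + 1 then (if k + 1 = n + 1 then 1 else 0)
    else 2 * T n k + T n (k + 1)

open Finset

lemma T_self (n : ℕ) : T n n = 1 := by
  cases n <;> simp [T]

lemma T_succ_succ {n k : ℕ} (h : k < n) : T (n + 1) (k + 1) = 2 * T n k + T n (k + 1) := by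
  rw [T, if_neg (by omega)]

lemma sum_Icc_add_one_add_one {M : Type*} [AddCommMonoid M] (a b : ℕ) (f : ℕ → M) :
    ∑ i ∈ Icc (a + 1) (b + 1), f i = ∑ i ∈ Icc a b, f (i + 1) := by
  rw [← map_add_right_Icc a b 1, sum_map]
  rfl

section AltChooseSum

variable {R : Type*} [CommRing R]

def altChooseSum (x : R) (n k : ℕ) : R :=
  ∑ i ∈ Icc k n, (-1) ^ (k + i) * x ^ (n - i) * (n.choose i : R)

lemma altChooseSum_zero_right (x : R) (n : ℕ) : altChooseSum x n 0 = (x - 1) ^ n := by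
  rw [sub_eq_neg_add, add_pow, Nat.range_succ_eq_Icc_zero]
  simp [altChooseSum]

lemma altChooseSum_self (x : R) (n : ℕ) : altChooseSum x n n = 1 := by
  simp [altChooseSum, ← two_mul]

lemma altChooseSum_succ_succ (x : R) (n k : ℕ) :
    altChooseSum x (n + 1) (k + 1) = x * altChooseSum x n (k + 1) + altChooseSum x n k := by
  set term : ℕ → ℕ → ℕ → R := fun n k i => (-1) ^ (k + i) * x ^ (n - i) * (n.choose i : R)
  have pascal (i : ℕ) :
      term (n + 1) (k + 1) (i + 1) = x * term n (k + 1) (i + 1) + term n k i := by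
    have hsign : (-1 : R) ^ (k + 1 + (i + 1)) = (-1) ^ (k + i) := by
      rw [show k + 1 + (i + 1) = k + i + 2 by omega, pow_add, neg_one_sq, mul_one]
    simp only [term, hsign, Nat.choose_succ_succ', Nat.cast_add, Nat.add_sub_add_right]
    rcases lt_or_ge i n with hi | hi
    · rw [show n - i = n - (i + 1) + 1 by omega, pow_succ]
      ring
    · simp [Nat.choose_eq_zero_of_lt (Nat.lt_succ_of_le hi)]
  have top_vanishes : term n (k + 1) (n + 1) = 0 := by
    simp [term]
  calc altChooseSum x (n + 1) (k + 1)
      = ∑ i ∈ Icc k n, term (n + 1) (k + 1) (i + 1) := sum_Icc_add_one_add_one k n _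
    _ = x * ∑ i ∈ Icc (k + 1) (n + 1), term n (k + 1) i + altChooseSum x n k := by
      rw [sum_congr rfl fun i _ => pascal i, sum_add_distrib, ← mul_sum,
        sum_Icc_add_one_add_one]
      rfl
    _ = x * altChooseSum x n (k + 1) + altChooseSum x n k := by
      rcases le_or_gt k n with hk | hk
      · rw [sum_Icc_succ_top (by omega), top_vanishes, add_zero]
        rfl
      · simp [altChooseSum, Icc_eq_empty_of_lt (show n < k + 1 by omega),
          Icc_eq_empty_of_lt (show n + 1 < k + 1 by omega)]

end AltChooseSum

lemma altChooseSum_two_eq_T (n k : ℕ) (hkn : k ≤ n) : altChooseSum (2 : ℤ) n k = T n (n - k) := by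
  induction n generalizing k with
  | zero => simp [Nat.le_zero.mp hkn, altChooseSum_self, T]
  | succ n ih =>
    rcases k with _ | k
    · simp [altChooseSum_zero_right, T_self]
    rcases (Nat.succ_le_succ_iff.mp hkn).eq_or_lt with rfl | hk
    · simp [altChooseSum_self, T]
    · rw [altChooseSum_succ_succ, ih (k + 1) hk, ih k hk.le, Nat.add_sub_add_right,
        show n - k = n - (k + 1) + 1 by omega, T_succ_succ (by omega)]

theorem stmt6_general (n k : ℕ) (hkn : k ≤ n) :
    ∑ i ∈ Finset.Icc k n, (-1 : ℤ) ^ (k + i) * 2 ^ (n - i) * (n.choose i) = T n (n - k) :=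
  altChooseSum_two_eq_T n k hkn

theorem stmt6 (n k : ℕ) (h3 : 3 ≤ k) (hkn : k ≤ n) :
    ∑ i ∈ Finset.Icc k n, (-1 : ℤ) ^ (k + i) * 2 ^ (n - i) * (n.choose i) = T n (n - k) :=
  stmt6_general n k hkn
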